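/- arXiv:1209.0873 — 2 statements merged into one kernel-verified Lean document; each statement's English description precedes it below -/
import Mathlib

section
/- For every p > 1, every t ≥ 1, and all r, s ∈ (0,1), one has tanh_p(M_t(r,s)) ≥ M_t(tanh_p(r), tanh_p(s)). -/
open Real Set

/-- Power mean `M_t(x,y)`. -/
noncomputable def powerMean (t x y : ℝ) : ℝ :=
  if t = 0 then Real.sqrt (x * y) else ((x ^ t + y ^ t) / 2) ^ (1 / t)

/-- Generalized arcsine: `arcsin_p x = ∫₀ˣ (1 - u^p)^(-1/p) du`. -/
noncomputable def arcsinp (p x : ℝ) : ℝ := ∫ u in (0:ℝ)..x, (1 - u ^ p) ^ (-(1 / p))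

/-- Generalized inverse hyperbolic tangent: `artanh_p x = ∫₀ˣ (1 - u^p)⁻¹ du`. -/
noncomputable def artanhp (p x : ℝ) : ℝ := ∫ u in (0:ℝ)..x, (1 - u ^ p)⁻¹

/-- Generalized arctangent: `arctan_p x = ∫₀ˣ (1 + u^p)⁻¹ du`. -/
noncomputable def arctanp (p x : ℝ) : ℝ := ∫ u in (0:ℝ)..x, (1 + u ^ p)⁻¹

/-- Generalized inverse hyperbolic sine: `arsinh_p x = ∫₀ˣ (1 + u^p)^(-1/p) du`. -/
noncomputable def arsinhp (p x : ℝ) : ℝ := ∫ u in (0:ℝ)..x, (1 + u ^ p) ^ (-(1 / p))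

/-- Generalized pi: `π_p = 2π/(p sin(π/p))`. -/
noncomputable def pip (p : ℝ) : ℝ := 2 * Real.pi / (p * Real.sin (Real.pi / p))

open MeasureTheory

section A
variable {p : ℝ}

lemma one_sub_rpow_pos (hp : 1 < p) {u : ℝ} (hu : u ∈ Ioo (-1:ℝ) 1) : 0 < 1 - u ^ p := by
  have hp0 : (0:ℝ) < p := lt_trans one_pos hp
  rcases le_or_gt 0 u with h | h
  · have : u ^ p < 1 := Real.rpow_lt_one h hu.2 hp0
    linarith
  · have h1 : u ^ p ≤ |u ^ p| := le_abs_self _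
    have h2 : |u ^ p| ≤ |u| ^ p := Real.abs_rpow_le_abs_rpow u p
    have h3 : |u| ^ p < 1 := Real.rpow_lt_one (abs_nonneg u) (abs_lt.mpr ⟨hu.1, hu.2⟩) hp0
    linarith

lemma cont_integrand (hp : 1 < p) {u : ℝ} (hu : u ∈ Ioo (-1:ℝ) 1) :
    ContinuousAt (fun v : ℝ => (1 - v ^ p)⁻¹) u := by
  have h1 : ContinuousAt (fun v : ℝ => v ^ p) u :=
    Real.continuousAt_rpow_const u p (Or.inr (le_of_lt (lt_trans one_pos hp)))
  exact (continuousAt_const.sub h1).inv₀ (ne_of_gt (one_sub_rpow_pos hp hu))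

lemma artanhp_hasDerivAt (hp : 1 < p) {x : ℝ} (hx : x ∈ Ico (0:ℝ) 1) :
    HasDerivAt (artanhp p) (1 - x ^ p)⁻¹ x := by
  have hsub : Icc (0:ℝ) x ⊆ Ioo (-1:ℝ) 1 := fun y hy =>
    ⟨by linarith [hy.1], lt_of_le_of_lt hy.2 hx.2⟩
  have hint : IntervalIntegrable (fun v : ℝ => (1 - v ^ p)⁻¹) volume 0 x := by
    apply ContinuousOn.intervalIntegrable
    rw [uIcc_of_le hx.1]
    exact fun y hy => (cont_integrand hp (hsub hy)).continuousWithinAt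
  have hmeas : StronglyMeasurableAtFilter (fun v : ℝ => (1 - v ^ p)⁻¹) (nhds x) volume :=
    ContinuousAt.stronglyMeasurableAtFilter isOpen_Ioo
      (fun y hy => cont_integrand hp hy) x ⟨by linarith [hx.1], hx.2⟩
  exact intervalIntegral.integral_hasDerivAt_right hint hmeas
    (cont_integrand hp ⟨by linarith [hx.1], hx.2⟩)

lemma artanhp_zero : artanhp p 0 = 0 := by simp [artanhp]

lemma artanhp_contOn (hp : 1 < p) : ContinuousOn (artanhp p) (Ico 0 1) :=
  fun x hx => (artanhp_hasDerivAt hp hx).continuousAt.continuousWithinAt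

lemma artanhp_strictMonoOn (hp : 1 < p) : StrictMonoOn (artanhp p) (Ico 0 1) := by
  apply strictMonoOn_of_deriv_pos (convex_Ico 0 1) (artanhp_contOn hp)
  intro x hx
  rw [interior_Ico] at hx
  rw [(artanhp_hasDerivAt hp ⟨hx.1.le, hx.2⟩).deriv]
  have : 0 < 1 - x ^ p := one_sub_rpow_pos hp ⟨by linarith [hx.1], hx.2⟩
  positivity

lemma artanhp_convexOn (hp : 1 < p) : ConvexOn ℝ (Ico 0 1) (artanhp p) := by
  apply MonotoneOn.convexOn_of_deriv (convex_Ico 0 1) (artanhp_contOn hp)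
  · intro x hx
    rw [interior_Ico] at hx
    exact (artanhp_hasDerivAt hp ⟨hx.1.le, hx.2⟩).differentiableAt.differentiableWithinAt
  · intro x hx y hy hxy
    rw [interior_Ico] at hx hy
    rw [(artanhp_hasDerivAt hp ⟨hx.1.le, hx.2⟩).deriv,
        (artanhp_hasDerivAt hp ⟨hy.1.le, hy.2⟩).deriv]
    have h1 : x ^ p ≤ y ^ p := Real.rpow_le_rpow hx.1.le hxy (by linarith)
    have h2 : 0 < 1 - y ^ p := one_sub_rpow_pos hp ⟨by linarith [hy.1], hy.2⟩
    exact inv_anti₀ h2 (by linarith)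

lemma artanhp_pos (hp : 1 < p) {x : ℝ} (hx : x ∈ Ioo (0:ℝ) 1) : 0 < artanhp p x := by
  have := artanhp_strictMonoOn hp (left_mem_Ico.mpr one_pos) ⟨hx.1.le, hx.2⟩ hx.1
  rwa [artanhp_zero] at this

lemma artanhp_slope_mono (hp : 1 < p) {x y : ℝ} (hx : x ∈ Ioo (0:ℝ) 1) (hy : y ∈ Ioo (0:ℝ) 1)
    (hxy : x ≤ y) : artanhp p x / x ≤ artanhp p y / y := by
  have h := (artanhp_convexOn hp).secant_mono (a := 0) (left_mem_Ico.mpr one_pos)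
    ⟨hx.1.le, hx.2⟩ ⟨hy.1.le, hy.2⟩ hx.1.ne' hy.1.ne' hxy
  simpa [artanhp_zero] using h

end A

section G
variable {p t : ℝ}

lemma G_hasDerivAt (hp : 1 < p) (ht : 1 ≤ t) {u : ℝ} (hu : u ∈ Ioo (0:ℝ) 1) :
    HasDerivAt (fun u : ℝ => (artanhp p (u ^ (1/t))) ^ t)
      ((artanhp p (u ^ (1/t)) / u ^ (1/t)) ^ (t - 1) * (1 - (u ^ (1/t)) ^ p)⁻¹) u := by
  have ht0 : t ≠ 0 := by linarith
  have ht0' : (0:ℝ) < t := by linarith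
  set x := u ^ (1/t) with hxdef
  have hx : x ∈ Ioo (0:ℝ) 1 :=
    ⟨Real.rpow_pos_of_pos hu.1 _, Real.rpow_lt_one hu.1.le hu.2 (by positivity)⟩
  have h1 : HasDerivAt (fun u : ℝ => u ^ (1/t)) ((1/t) * u ^ (1/t - 1)) u :=
    Real.hasDerivAt_rpow_const (Or.inl hu.1.ne')
  have h2 : HasDerivAt (artanhp p) (1 - x ^ p)⁻¹ x :=
    artanhp_hasDerivAt hp ⟨hx.1.le, hx.2⟩
  have h3 : HasDerivAt (fun z : ℝ => z ^ t) (t * (artanhp p x) ^ (t - 1)) (artanhp p x) :=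
    Real.hasDerivAt_rpow_const (Or.inr ht)
  have hcomp := (h3.comp u (h2.comp u h1) : HasDerivAt _ _ u)
  convert hcomp using 1
  · rfl
  · rfl
  · rfl
  have hAx : 0 < artanhp p x := artanhp_pos hp hx
  have hupow : u ^ (1/t - 1) = (x ^ (t - 1))⁻¹ := by
    rw [← Real.rpow_neg hx.1.le, hxdef, ← Real.rpow_mul hu.1.le]
    congr 1
    field_simp
    ring
  rw [hupow, Real.div_rpow hAx.le hx.1.le, div_eq_mul_inv]
  have h' : t * artanhp p x ^ (t - 1) * ((1 - x ^ p)⁻¹ * (1/t * (x ^ (t - 1))⁻¹)) =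
      (t * (1/t)) * (artanhp p x ^ (t - 1) * (x ^ (t - 1))⁻¹ * (1 - x ^ p)⁻¹) := by ring
  rw [h', mul_one_div_cancel ht0, one_mul]

end G

section G2
variable {p t : ℝ}

lemma D_mono (hp : 1 < p) (ht : 1 ≤ t) {u v : ℝ} (hu : u ∈ Ioo (0:ℝ) 1)
    (hv : v ∈ Ioo (0:ℝ) 1) (huv : u ≤ v) :
    (artanhp p (u ^ (1/t)) / u ^ (1/t)) ^ (t - 1) * (1 - (u ^ (1/t)) ^ p)⁻¹ ≤
    (artanhp p (v ^ (1/t)) / v ^ (1/t)) ^ (t - 1) * (1 - (v ^ (1/t)) ^ p)⁻¹ := by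
  have ht0' : (0:ℝ) < t := by linarith
  set x := u ^ (1/t)
  set y := v ^ (1/t)
  have hx : x ∈ Ioo (0:ℝ) 1 :=
    ⟨Real.rpow_pos_of_pos hu.1 _, Real.rpow_lt_one hu.1.le hu.2 (by positivity)⟩
  have hy : y ∈ Ioo (0:ℝ) 1 :=
    ⟨Real.rpow_pos_of_pos hv.1 _, Real.rpow_lt_one hv.1.le hv.2 (by positivity)⟩
  have hxy : x ≤ y := Real.rpow_le_rpow hu.1.le huv (by positivity)
  have hfac1 : (artanhp p x / x) ^ (t - 1) ≤ (artanhp p y / y) ^ (t - 1) :=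
    Real.rpow_le_rpow (div_nonneg (artanhp_pos hp hx).le hx.1.le)
      (artanhp_slope_mono hp hx hy hxy) (by linarith)
  have hp1 : x ^ p ≤ y ^ p := Real.rpow_le_rpow hx.1.le hxy (by linarith)
  have hy1 : 0 < 1 - y ^ p := one_sub_rpow_pos hp ⟨by linarith [hy.1], hy.2⟩
  have hfac2 : (1 - x ^ p)⁻¹ ≤ (1 - y ^ p)⁻¹ := inv_anti₀ hy1 (by linarith)
  have h1 : (0:ℝ) ≤ (artanhp p y / y) ^ (t - 1) := Real.rpow_nonneg (div_nonneg (artanhp_pos hp hy).le hy.1.le) _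
  have h2 : (0:ℝ) < (1 - x ^ p)⁻¹ := by
    have := one_sub_rpow_pos hp (⟨by linarith [hx.1], hx.2⟩ : x ∈ Ioo (-1:ℝ) 1)
    positivity
  exact mul_le_mul hfac1 hfac2 h2.le h1

lemma G_convexOn (hp : 1 < p) (ht : 1 ≤ t) :
    ConvexOn ℝ (Ioo (0:ℝ) 1) (fun u : ℝ => (artanhp p (u ^ (1/t))) ^ t) := by
  apply MonotoneOn.convexOn_of_deriv (convex_Ioo 0 1)
  · exact fun u hu => (G_hasDerivAt hp ht hu).continuousAt.continuousWithinAt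
  · rw [isOpen_Ioo.interior_eq]
    exact fun u hu => (G_hasDerivAt hp ht hu).differentiableAt.differentiableWithinAt
  · rw [isOpen_Ioo.interior_eq]
    intro u hu v hv huv
    rw [(G_hasDerivAt hp ht hu).deriv, (G_hasDerivAt hp ht hv).deriv]
    exact D_mono hp ht hu hv huv

lemma key_ineq (hp : 1 < p) (ht : 1 ≤ t) {a b : ℝ} (ha : a ∈ Ioo (0:ℝ) 1)
    (hb : b ∈ Ioo (0:ℝ) 1) :
    artanhp p (((a ^ t + b ^ t) / 2) ^ (1/t)) ≤
      ((artanhp p a ^ t + artanhp p b ^ t) / 2) ^ (1/t) := by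
  have ht0 : t ≠ 0 := by linarith
  have ht0' : (0:ℝ) < t := by linarith
  have hat : a ^ t ∈ Ioo (0:ℝ) 1 :=
    ⟨Real.rpow_pos_of_pos ha.1 _, Real.rpow_lt_one ha.1.le ha.2 ht0'⟩
  have hbt : b ^ t ∈ Ioo (0:ℝ) 1 :=
    ⟨Real.rpow_pos_of_pos hb.1 _, Real.rpow_lt_one hb.1.le hb.2 ht0'⟩
  have hm : (a ^ t + b ^ t) / 2 ∈ Ioo (0:ℝ) 1 := ⟨by linarith [hat.1, hbt.1], by linarith [hat.2, hbt.2]⟩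
  have hG := (G_convexOn hp ht).2 hat hbt (le_of_lt one_half_pos) (le_of_lt one_half_pos)
    (by norm_num)
  simp only [smul_eq_mul] at hG
  have e0 : (1/2 : ℝ) * (a ^ t) + (1/2 : ℝ) * (b ^ t) = (a ^ t + b ^ t) / 2 := by ring
  rw [e0] at hG
  have e1 : ((a:ℝ) ^ t) ^ (1/t) = a := by
    rw [← Real.rpow_mul ha.1.le, mul_one_div_cancel ht0, Real.rpow_one]
  have e2 : ((b:ℝ) ^ t) ^ (1/t) = b := by
    rw [← Real.rpow_mul hb.1.le, mul_one_div_cancel ht0, Real.rpow_one]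
  rw [e1, e2] at hG
  have hM : ((a ^ t + b ^ t) / 2) ^ (1/t) ∈ Ioo (0:ℝ) 1 :=
    ⟨Real.rpow_pos_of_pos hm.1 _, Real.rpow_lt_one hm.1.le hm.2 (by positivity)⟩
  have hAM : 0 ≤ artanhp p (((a ^ t + b ^ t) / 2) ^ (1/t)) := (artanhp_pos hp hM).le
  have hre : artanhp p (((a ^ t + b ^ t) / 2) ^ (1/t)) =
      ((artanhp p (((a ^ t + b ^ t) / 2) ^ (1/t))) ^ t) ^ (1/t) := by
    rw [← Real.rpow_mul hAM, mul_one_div_cancel ht0, Real.rpow_one]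
  rw [hre]
  apply Real.rpow_le_rpow (Real.rpow_nonneg hAM t) _ (by positivity)
  calc (artanhp p (((a ^ t + b ^ t) / 2) ^ (1/t))) ^ t
      ≤ 1/2 * artanhp p a ^ t + 1/2 * artanhp p b ^ t := hG
    _ = (artanhp p a ^ t + artanhp p b ^ t) / 2 := by ring
end G2

theorem tanhp_powerMean_ge (p t : ℝ) (hp : 1 < p) (ht : 1 ≤ t)
    (tanhp : ℝ → ℝ)
    (hmem : ∀ y ∈ Set.Ioi (0:ℝ), tanhp y ∈ Set.Ioo (0:ℝ) 1)
    (hinv : ∀ y ∈ Set.Ioi (0:ℝ), artanhp p (tanhp y) = y)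
    (r s : ℝ) (hr : r ∈ Set.Ioo (0:ℝ) 1) (hs : s ∈ Set.Ioo (0:ℝ) 1) :
    powerMean t (tanhp r) (tanhp s) ≤ tanhp (powerMean t r s) := by
  have ht0 : t ≠ 0 := by linarith
  have ht0' : (0:ℝ) < t := by linarith
  obtain ⟨ha1, ha2⟩ := hmem r hr.1
  obtain ⟨hb1, hb2⟩ := hmem s hs.1
  set a := tanhp r
  set b := tanhp s
  have hAa : artanhp p a = r := hinv r hr.1
  have hAb : artanhp p b = s := hinv s hs.1
  have hPMpos : powerMean t r s ∈ Ioi (0:ℝ) := by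
    rw [powerMean, if_neg ht0]
    have h1 := Real.rpow_pos_of_pos hr.1 t
    have h2 := Real.rpow_pos_of_pos hs.1 t
    exact Real.rpow_pos_of_pos (by linarith) _
  have hc := hmem _ hPMpos
  have hAc : artanhp p (tanhp (powerMean t r s)) = powerMean t r s := hinv _ hPMpos
  have hkey := key_ineq hp ht (⟨ha1, ha2⟩ : a ∈ Ioo 0 1) ⟨hb1, hb2⟩
  rw [hAa, hAb] at hkey
  have hL : ((a ^ t + b ^ t) / 2) ^ (1/t) ∈ Ioo (0:ℝ) 1 := by
    have hat : a ^ t ∈ Ioo (0:ℝ) 1 :=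
      ⟨Real.rpow_pos_of_pos ha1 _, Real.rpow_lt_one ha1.le ha2 ht0'⟩
    have hbt : b ^ t ∈ Ioo (0:ℝ) 1 :=
      ⟨Real.rpow_pos_of_pos hb1 _, Real.rpow_lt_one hb1.le hb2 ht0'⟩
    have hm : (a ^ t + b ^ t) / 2 ∈ Ioo (0:ℝ) 1 :=
      ⟨by linarith [hat.1, hbt.1], by linarith [hat.2, hbt.2]⟩
    exact ⟨Real.rpow_pos_of_pos hm.1 _, Real.rpow_lt_one hm.1.le hm.2 (by positivity)⟩
  have hle : artanhp p (((a ^ t + b ^ t) / 2) ^ (1/t)) ≤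
      artanhp p (tanhp (powerMean t r s)) := by
    rw [hAc, powerMean, if_neg ht0]
    exact hkey
  have hfin := ((artanhp_strictMonoOn hp).le_iff_le ⟨hL.1.le, hL.2⟩ ⟨hc.1.le, hc.2⟩).mp hle
  rw [powerMean, if_neg ht0]
  exact hfin
end

section
/- For every m ≥ -1 and p > 1, the function f₃(x) = (arctan_p(x)/x)^m · (1 + x^p)^{-1} is decreasing on (0,1). -/
open Real Set

section ArctanpAux
open MeasureTheory intervalIntegral

lemma cont_integrand_s11 {p : ℝ} (hp : 0 < p) :
    Continuous (fun u : ℝ => (1 + u ^ p)) :=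
  continuous_const.add
    (continuous_iff_continuousAt.mpr fun u => Real.continuousAt_rpow_const u p (Or.inr hp.le))

lemma integrable_integrand {p x : ℝ} (hp : 0 < p) (hx : 0 ≤ x) :
    IntervalIntegrable (fun u : ℝ => (1 + u ^ p)⁻¹) volume 0 x := by
  apply ContinuousOn.intervalIntegrable
  intro u hu
  rw [uIcc_of_le hx] at hu
  exact (((cont_integrand_s11 hp).continuousAt).continuousWithinAt).inv₀
    (ne_of_gt (by have := Real.rpow_nonneg hu.1 p; linarith))

lemma arctanp_hasDerivAt {p x : ℝ} (hp : 0 < p) (hx : 0 < x) :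
    HasDerivAt (arctanp p) ((1 + x ^ p)⁻¹) x := by
  have hmeas : StronglyMeasurableAtFilter (fun u : ℝ => (1 + u ^ p)⁻¹) (nhds x) :=
    ((cont_integrand_s11 hp).measurable.inv.stronglyMeasurable).stronglyMeasurableAtFilter
  have hcont : ContinuousAt (fun u : ℝ => (1 + u ^ p)⁻¹) x :=
    ((cont_integrand_s11 hp).continuousAt).inv₀
      (ne_of_gt (by have := Real.rpow_nonneg hx.le p; linarith))
  exact intervalIntegral.integral_hasDerivAt_right (integrable_integrand hp hx.le) hmeas hcont

lemma arctanp_le {p x : ℝ} (hp : 0 < p) (hx : 0 ≤ x) : arctanp p x ≤ x := by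
  have h := intervalIntegral.integral_mono_on hx (integrable_integrand hp hx)
    (_root_.intervalIntegrable_const (c := (1:ℝ)))
    (fun u hu => by
      have h1 : (0:ℝ) ≤ u ^ p := Real.rpow_nonneg hu.1 p
      have : (1:ℝ) ≤ 1 + u ^ p := by linarith
      exact inv_le_one_of_one_le₀ this)
  simpa [arctanp] using h

lemma arctanp_ge {p x : ℝ} (hp : 0 < p) (hx : 0 ≤ x) :
    x * (1 + x ^ p)⁻¹ ≤ arctanp p x := by
  have h := intervalIntegral.integral_mono_on hx
    (_root_.intervalIntegrable_const (c := ((1 + x ^ p)⁻¹ : ℝ)))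
    (integrable_integrand hp hx)
    (fun u hu => by
      have h1 : u ^ p ≤ x ^ p := Real.rpow_le_rpow hu.1 hu.2 hp.le
      have h2 : (0:ℝ) < 1 + u ^ p := by
        have := Real.rpow_nonneg hu.1 p; linarith
      exact inv_anti₀ h2 (by linarith))
  simpa [arctanp] using h

end ArctanpAux

open MeasureTheory in
theorem arctanp_aux_strictAnti (m p : ℝ) (hm : -1 ≤ m) (hp : 1 < p) :
    StrictAntiOn (fun x : ℝ => (arctanp p x / x) ^ m * (1 + x ^ p)⁻¹)
      (Set.Ioo (0:ℝ) 1) := by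
  have hp0 : (0:ℝ) < p := lt_trans one_pos hp
  have key : ∀ x ∈ Ioo (0:ℝ) 1,
      ∃ d, HasDerivAt (fun x : ℝ => (arctanp p x / x) ^ m * (1 + x ^ p)⁻¹) d x ∧ d < 0 := by
    intro x hx
    obtain ⟨hx0, hx1⟩ := hx
    set A := arctanp p x with hA_def
    have hX : (0:ℝ) < x ^ p := Real.rpow_pos_of_pos hx0 p
    have h1X : (0:ℝ) < 1 + x ^ p := by linarith
    have hA_le : A ≤ x := arctanp_le hp0 hx0.le
    have hA_ge : x * (1 + x ^ p)⁻¹ ≤ A := arctanp_ge hp0 hx0.le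
    have hA_pos : 0 < A := lt_of_lt_of_le (by positivity) hA_ge
    have hG : (0:ℝ) < A / x := div_pos hA_pos hx0
    -- derivatives
    have hdX : HasDerivAt (fun x : ℝ => x ^ p) (p * x ^ (p - 1)) x :=
      Real.hasDerivAt_rpow_const (Or.inl hx0.ne')
    have hdh : HasDerivAt (fun x : ℝ => (1 + x ^ p)⁻¹)
        (-(0 + p * x ^ (p - 1)) / (1 + x ^ p) ^ 2) x :=
      ((hasDerivAt_const x (1:ℝ)).add hdX).inv h1X.ne'
    have hdg : HasDerivAt (fun x : ℝ => arctanp p x / x)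
        (((1 + x ^ p)⁻¹ * x - A * 1) / x ^ 2) x :=
      (arctanp_hasDerivAt hp0 hx0).div (hasDerivAt_id x) hx0.ne'
    have hdgm : HasDerivAt (fun x : ℝ => (arctanp p x / x) ^ m)
        ((((1 + x ^ p)⁻¹ * x - A * 1) / x ^ 2) * m * (A / x) ^ (m - 1)) x :=
      hdg.rpow_const (Or.inl (ne_of_gt hG))
    have hdf := hdgm.mul hdh
    refine ⟨_, hdf, ?_⟩
    -- sign of derivative
    have hG1 : (0:ℝ) < (A / x) ^ (m - 1) := Real.rpow_pos_of_pos hG _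
    have hGm : (A / x) ^ m = (A / x) ^ (m - 1) * (A / x) := by
      have h := Real.rpow_add hG (m - 1) 1
      rw [Real.rpow_one, show m - 1 + 1 = m by ring] at h
      exact h
    have hxp1 : x ^ (p - 1) = x ^ p / x := by
      rw [Real.rpow_sub hx0, Real.rpow_one]
    have hN : m * (x - A * (1 + x ^ p)) - A * p * x ^ p < 0 := by
      have hu : x - A * (1 + x ^ p) ≤ 0 := by
        have := (div_le_iff₀ h1X).mp (by rwa [div_eq_mul_inv] : x / (1 + x ^ p) ≤ A)
        linarith
      have hkey : A * (1 + x ^ p) - A * p * x ^ p < x := by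
        nlinarith [mul_pos hA_pos (mul_pos (sub_pos.mpr hp) hX)]
      nlinarith [mul_nonneg (by linarith : (0:ℝ) ≤ m + 1) (by linarith : (0:ℝ) ≤ A * (1 + x ^ p) - x)]
    have hsplit : (((1 + x ^ p)⁻¹ * x - A * 1) / x ^ 2) * m * (A / x) ^ (m - 1) * (1 + x ^ p)⁻¹
        + (A / x) ^ m * (-(0 + p * x ^ (p - 1)) / (1 + x ^ p) ^ 2)
        = (A / x) ^ (m - 1) *
          ((m * (x - A * (1 + x ^ p)) - A * p * x ^ p) / (x ^ 2 * (1 + x ^ p) ^ 2)) := by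
      rw [hGm, hxp1]
      field_simp
      ring
    rw [hsplit]
    exact mul_neg_of_pos_of_neg hG1 (div_neg_of_neg_of_pos hN (by positivity))
  have hcont : ContinuousOn (fun x : ℝ => (arctanp p x / x) ^ m * (1 + x ^ p)⁻¹)
      (Ioo (0:ℝ) 1) := fun x hx => by
    obtain ⟨d, hd, _⟩ := key x hx
    exact hd.continuousAt.continuousWithinAt
  apply strictAntiOn_of_deriv_neg (convex_Ioo 0 1) hcont
  intro x hx
  rw [interior_Ioo] at hx
  obtain ⟨d, hd, hdneg⟩ := key x hx
  rwa [hd.deriv]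
end
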